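/- arXiv:quant-ph/0610175 — 6 statements merged into one kernel-verified Lean document; each statement's English description precedes it below -/
import Mathlib

section
/- Let X be a set of cardinality 2 (Alice's inputs), Y a set (Bob's inputs), and let 𝒜 and ℬ be finite nonempty sets (Alice's and Bob's outputs), and let W ⊆ X × Y × 𝒜 × ℬ be a relation. If there exists a quantum winning strategy for the game (X, Y, 𝒜, ℬ, W) in the commuting-operator model, then there also exists a classical winning strategy, i.e. functions a : X → 𝒜 and b : Y → ℬ such that (x, y, a x, b y) ∈ W for all x ∈ X and y ∈ Y. In particular, no bipartite pseudo-telepathy game exists in which one of the partners receives only two questions. -/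
/-!
Expanding `⟪ψ, ψ⟫ ≠ 0` through the resolutions of the identity of Alice's two measurements
`x₁, x₂` yields answers `a₁, a₂` with `⟪P₁ ψ, P₂ ψ⟫ ≠ 0`, where `Pᵢ = P xᵢ aᵢ`; expanding once
more through Bob's measurement `y` yields an answer `b y` with `⟪P₁ ψ, Q (P₂ ψ)⟫ ≠ 0`, where
`Q = Q y (b y)`. As `Q` is a projection commuting with both `Pᵢ`, this equals
`⟪P₁ (Q ψ), P₂ (Q ψ)⟫`, so neither `Pᵢ (Q ψ)` vanishes. Since `Pᵢ Q` is again a projection,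
`⟪ψ, Pᵢ (Q ψ)⟫ = ‖Pᵢ (Q ψ)‖² ≠ 0`, and the winning condition puts `(xᵢ, y, aᵢ, b y)` in `W`.
-/

open scoped InnerProductSpace

namespace LinearMap

variable {𝕜 E : Type*} [RCLike 𝕜] [NormedAddCommGroup E] [InnerProductSpace 𝕜 E]

theorem IsSymmetricProjection.mul_of_commute {p q : E →ₗ[𝕜] E}
    (hp : p.IsSymmetricProjection) (hq : q.IsSymmetricProjection) (hpq : Commute p q) :
    (p * q).IsSymmetricProjection :=
  ⟨hp.isIdempotentElem.mul_of_commute hpq hq.isIdempotentElem,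
    hp.isSymmetric.mul_of_commute hq.isSymmetric hpq⟩

theorem IsSymmetricProjection.inner_self_apply_eq_zero_iff {p : E →ₗ[𝕜] E}
    (hp : p.IsSymmetricProjection) {x : E} : ⟪x, p x⟫_𝕜 = 0 ↔ p x = 0 := by
  have hpx : ⟪x, p x⟫_𝕜 = ⟪p x, p x⟫_𝕜 := by
    conv_lhs => rw [← hp.isIdempotentElem.eq, Module.End.mul_apply, ← hp.isSymmetric]
  rw [hpx, inner_self_eq_zero]

theorem exists_inner_apply_ne_zero_of_sum_eq_id {ι : Type*} [Fintype ι] {p : ι → E →ₗ[𝕜] E}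
    (hp : ∑ i, p i = LinearMap.id) {x y : E} (h : ⟪x, y⟫_𝕜 ≠ 0) : ∃ i, ⟪x, p i y⟫_𝕜 ≠ 0 := by
  have hsum : ∑ i, ⟪x, p i y⟫_𝕜 = ⟪x, y⟫_𝕜 := by
    rw [← inner_sum, ← LinearMap.sum_apply, hp, LinearMap.id_apply]
  obtain ⟨i, -, hi⟩ := Finset.exists_ne_zero_of_sum_ne_zero (hsum ▸ h)
  exact ⟨i, hi⟩

theorem IsSymmetricProjection.inner_self_mul_apply_ne_zero
    {p₁ p₂ q : E →ₗ[𝕜] E} (hp₁ : p₁.IsSymmetricProjection) (hp₂ : p₂.IsSymmetricProjection)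
    (hq : q.IsSymmetricProjection) (h₁ : Commute p₁ q) (h₂ : Commute p₂ q) {x : E}
    (h : ⟪p₁ x, q (p₂ x)⟫_𝕜 ≠ 0) : ⟪x, (p₁ * q) x⟫_𝕜 ≠ 0 ∧ ⟪x, (p₂ * q) x⟫_𝕜 ≠ 0 := by
  have hcompress : ⟪p₁ x, q (p₂ x)⟫_𝕜 = ⟪(p₁ * q) x, (p₂ * q) x⟫_𝕜 :=
    calc ⟪p₁ x, q (p₂ x)⟫_𝕜 = ⟪p₁ x, q (q (p₂ x))⟫_𝕜 := by
          rw [← Module.End.mul_apply q q, hq.isIdempotentElem.eq]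
      _ = ⟪(q * p₁) x, (q * p₂) x⟫_𝕜 := (hq.isSymmetric _ _).symm
      _ = ⟪(p₁ * q) x, (p₂ * q) x⟫_𝕜 := by rw [h₁.eq, h₂.eq]
  rw [Ne, (hp₁.mul_of_commute hq h₁).inner_self_apply_eq_zero_iff, Ne,
    (hp₂.mul_of_commute hq h₂).inner_self_apply_eq_zero_iff]
  refine ⟨fun h0 ↦ h ?_, fun h0 ↦ h ?_⟩
  · rw [hcompress, h0, inner_zero_left]
  · rw [hcompress, h0, inner_zero_right]

end LinearMap

theorem no_pseudotelepathy_with_two_inputs_general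
    {X Y 𝒜 ℬ : Type*} [Fintype X] [Fintype 𝒜] [Fintype ℬ]
    (hX : Fintype.card X = 2)
    (W : Set (X × Y × 𝒜 × ℬ))
    {H : Type*} [NormedAddCommGroup H] [InnerProductSpace ℂ H]
    (ψ : H) (hψ : ψ ≠ 0)
    (P : X → 𝒜 → H →ₗ[ℂ] H) (Q : Y → ℬ → H →ₗ[ℂ] H)
    (hPidem : ∀ x a, P x a ∘ₗ P x a = P x a)
    (hPsa : ∀ x a (u v : H), ⟪P x a u, v⟫_ℂ = ⟪u, P x a v⟫_ℂ)
    (hPsum : ∀ x, ∑ a, P x a = LinearMap.id)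
    (hQidem : ∀ y b, Q y b ∘ₗ Q y b = Q y b)
    (hQsa : ∀ y b (u v : H), ⟪Q y b u, v⟫_ℂ = ⟪u, Q y b v⟫_ℂ)
    (hQsum : ∀ y, ∑ b, Q y b = LinearMap.id)
    (hcomm : ∀ x y a b, P x a ∘ₗ Q y b = Q y b ∘ₗ P x a)
    (hwin : ∀ x y a b, ⟪ψ, P x a (Q y b ψ)⟫_ℂ ≠ 0 → (x, y, a, b) ∈ W) :
    ∃ (a : X → 𝒜) (b : Y → ℬ), ∀ x y, (x, y, a x, b y) ∈ W := by
  classical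
  have hP x a : (P x a).IsSymmetricProjection := ⟨hPidem x a, hPsa x a⟩
  have hQ y b : (Q y b).IsSymmetricProjection := ⟨hQidem y b, hQsa y b⟩
  obtain ⟨x₁, x₂, hx₁₂, hXuniv⟩ := Finset.card_eq_two.mp hX
  obtain ⟨a₁, ha₁⟩ := LinearMap.exists_inner_apply_ne_zero_of_sum_eq_id (hPsum x₁)
    (inner_self_ne_zero.mpr hψ)
  obtain ⟨a₂, ha₂⟩ := LinearMap.exists_inner_apply_ne_zero_of_sum_eq_id (hPsum x₂)
    (x := P x₁ a₁ ψ) (hPsa x₁ a₁ ψ ψ ▸ ha₁)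
  choose b hb using fun y ↦ LinearMap.exists_inner_apply_ne_zero_of_sum_eq_id (hQsum y) ha₂
  refine ⟨fun x ↦ if x = x₁ then a₁ else a₂, b, fun x y ↦ ?_⟩
  obtain ⟨hne₁, hne₂⟩ := (hP x₁ a₁).inner_self_mul_apply_ne_zero (hP x₂ a₂) (hQ y (b y))
    (hcomm x₁ y a₁ (b y)) (hcomm x₂ y a₂ (b y)) (hb y)
  obtain rfl | rfl : x = x₁ ∨ x = x₂ := by simpa [hXuniv] using Finset.mem_univ x
  · simpa using hwin x y a₁ (b y) hne₁
  · simpa [hx₁₂.symm] using hwin x y a₂ (b y) hne₂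

/-- **No bipartite pseudo-telepathy game with only two questions for Alice.**
If a bipartite game whose Alice-input set `X` has cardinality 2 admits a winning
quantum strategy in the commuting-operator model, then it also admits a classical
winning strategy. -/
theorem no_pseudotelepathy_with_two_inputs
    {X Y 𝒜 ℬ : Type*} [Fintype X] [Fintype 𝒜] [Nonempty 𝒜] [Fintype ℬ] [Nonempty ℬ]
    (hX : Fintype.card X = 2)
    (W : Set (X × Y × 𝒜 × ℬ))
    {H : Type*} [NormedAddCommGroup H] [InnerProductSpace ℂ H] [CompleteSpace H]
    (ψ : H) (hψ : ψ ≠ 0)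
    (P : X → 𝒜 → H →ₗ[ℂ] H) (Q : Y → ℬ → H →ₗ[ℂ] H)
    (hPidem : ∀ x a, P x a ∘ₗ P x a = P x a)
    (hPsa : ∀ x a (u v : H), ⟪P x a u, v⟫_ℂ = ⟪u, P x a v⟫_ℂ)
    (hPsum : ∀ x, ∑ a, P x a = LinearMap.id)
    (hQidem : ∀ y b, Q y b ∘ₗ Q y b = Q y b)
    (hQsa : ∀ y b (u v : H), ⟪Q y b u, v⟫_ℂ = ⟪u, Q y b v⟫_ℂ)
    (hQsum : ∀ y, ∑ b, Q y b = LinearMap.id)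
    (hcomm : ∀ x y a b, P x a ∘ₗ Q y b = Q y b ∘ₗ P x a)
    (hwin : ∀ x y a b, ⟪ψ, P x a (Q y b ψ)⟫_ℂ ≠ 0 → (x, y, a, b) ∈ W) :
    ∃ (a : X → 𝒜) (b : Y → ℬ), ∀ x y, (x, y, a x, b y) ∈ W :=
  no_pseudotelepathy_with_two_inputs_general hX W ψ hψ P Q hPidem hPsa hPsum hQidem hQsa hQsum hcomm
    hwin
end

section
/- Let H be a complex inner product space and let φ, φ' ∈ H satisfy ⟪φ, φ'⟫ ≠ 0. Let (R_b)_{b ∈ ℬ} be a finite family of orthogonal projections on H with ∑_b R_b = 1. Then there exists b ∈ ℬ such that ⟪φ, R_b φ⟫ ≠ 0 and ⟪φ', R_b φ'⟫ ≠ 0. -/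
/-!
For an orthogonal projection `P`, `⟪u, P u⟫ = ‖P u‖²` and `⟪u, P v⟫ = ⟪P u, P v⟫`, so the cross
term `⟪φ, R b φ'⟫` vanishes whenever one of the two expectation values does. If no `b` had both
nonzero, every term of `⟪φ, φ'⟫ = ∑ b, ⟪φ, R b φ'⟫` would vanish.
-/

open scoped InnerProductSpace

namespace LinearMap.IsSymmetric

variable {𝕜 E : Type*} [RCLike 𝕜] [NormedAddCommGroup E] [InnerProductSpace 𝕜 E]
  {P : E →ₗ[𝕜] E}

theorem inner_apply_right_eq_inner_apply_apply (hP : P.IsSymmetric) (hPP : IsIdempotentElem P)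
    (u v : E) : ⟪u, P v⟫_𝕜 = ⟪P u, P v⟫_𝕜 := by
  rw [hP, ← Module.End.mul_apply, hPP.eq]

theorem apply_eq_zero_of_inner_self_apply_eq_zero (hP : P.IsSymmetric) (hPP : IsIdempotentElem P)
    {u : E} (hu : ⟪u, P u⟫_𝕜 = 0) : P u = 0 := by
  rwa [hP.inner_apply_right_eq_inner_apply_apply hPP, inner_self_eq_zero] at hu

theorem inner_apply_eq_zero_of_inner_self_apply_eq_zero (hP : P.IsSymmetric)
    (hPP : IsIdempotentElem P) {u v : E} (h : ⟪u, P u⟫_𝕜 = 0 ∨ ⟪v, P v⟫_𝕜 = 0) :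
    ⟪u, P v⟫_𝕜 = 0 := by
  rw [hP.inner_apply_right_eq_inner_apply_apply hPP]
  rcases h with hu | hv
  · rw [hP.apply_eq_zero_of_inner_self_apply_eq_zero hPP hu, inner_zero_left]
  · rw [hP.apply_eq_zero_of_inner_self_apply_eq_zero hPP hv, inner_zero_right]

end LinearMap.IsSymmetric

/-- **A common non-vanishing projector for two overlapping states.**
If `⟪φ, φ'⟫ ≠ 0` and `(R b)` is a finite family of orthogonal projections summing
to the identity, then some `R b` has nonzero expectation value in both `φ` and `φ'`. -/
theorem exists_common_projection_of_overlap
    {H : Type*} [NormedAddCommGroup H] [InnerProductSpace ℂ H]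
    {ℬ : Type*} [Fintype ℬ]
    (φ φ' : H) (hφφ' : ⟪φ, φ'⟫_ℂ ≠ 0)
    (R : ℬ → H →ₗ[ℂ] H)
    (hRidem : ∀ b, R b ∘ₗ R b = R b)
    (hRsa : ∀ b (u v : H), ⟪R b u, v⟫_ℂ = ⟪u, R b v⟫_ℂ)
    (hRsum : ∑ b, R b = LinearMap.id) :
    ∃ b : ℬ, ⟪φ, R b φ⟫_ℂ ≠ 0 ∧ ⟪φ', R b φ'⟫_ℂ ≠ 0 := by
  by_contra! h
  apply hφφ'
  calc ⟪φ, φ'⟫_ℂ = ∑ b, ⟪φ, R b φ'⟫_ℂ := by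
        rw [← inner_sum, ← LinearMap.sum_apply, hRsum, LinearMap.id_apply]
    _ = 0 := Finset.sum_eq_zero fun b _ =>
        LinearMap.IsSymmetric.inner_apply_eq_zero_of_inner_self_apply_eq_zero (hRsa b) (hRidem b)
          (or_iff_not_imp_left.mpr (h b))
end

section
/- There is no function c : Fin 3 → Fin 3 → ZMod 2 such that for every x ∈ Fin 3, c x 0 + c x 1 + c x 2 = 0, and for every y ∈ Fin 3, c 0 y + c 1 y + c 2 y = 1. Hence no shared classical table allows Alice and Bob to win the Magic Square game on all nine inputs. -/
/-! Summing the whole table by rows gives `3 • 0 = 0`, summing it by columns gives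
`3 • 1 = 1`, and `0 ≠ 1` in `ZMod 2`. -/

theorem card_smul_eq_card_smul_of_row_col_sums {ι κ M : Type*} [Fintype ι] [Fintype κ]
    [AddCommMonoid M] (c : ι → κ → M) {a b : M} (hrow : ∀ i, ∑ j, c i j = a)
    (hcol : ∀ j, ∑ i, c i j = b) : Fintype.card ι • a = Fintype.card κ • b :=
  calc Fintype.card ι • a = ∑ i, ∑ j, c i j := by simp [hrow]
    _ = ∑ j, ∑ i, c i j := Finset.sum_comm
    _ = Fintype.card κ • b := by simp [hcol]

/-- **No classical magic square exists.**
There is no 3×3 table of bits whose rows all sum to `0` and whose columns all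
sum to `1` (mod 2); hence no shared classical table lets Alice and Bob win the
Magic Square game on all nine inputs. -/
theorem no_magic_square_table :
    ¬ ∃ c : Fin 3 → Fin 3 → ZMod 2,
        (∀ x : Fin 3, c x 0 + c x 1 + c x 2 = 0) ∧
        (∀ y : Fin 3, c 0 y + c 1 y + c 2 y = 1) := by
  rintro ⟨c, hrow, hcol⟩
  have htotal := card_smul_eq_card_smul_of_row_col_sums c (a := 0) (b := 1)
    (by simpa only [Fin.sum_univ_three] using hrow)
    (by simpa only [Fin.sum_univ_three] using hcol)
  rw [Fintype.card_fin] at htotal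
  exact absurd htotal (by decide)
end

section
/- For every deterministic Alice strategy A and deterministic Bob strategy B for the Magic Square game, the number of input pairs (x, y) ∈ Fin 3 × Fin 3 on which (A, B) wins, i.e. the cardinality of {(x, y) : A x y = B y x}, is at most 8. -/
/-!
If (A, B) won on all nine inputs, Bob's table would be the transpose of Alice's, so the sum of
all entries could be computed from Alice's rows or from Bob's columns. Alice's row parities add
up to `0`, Bob's column parities to `3 • 1 = 1` in `ZMod 2`, a contradiction.
-/

open Finset

theorem exists_ne_transpose_of_smul_ne {ι κ M : Type*} [Fintype ι] [Fintype κ]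
    [AddCommMonoid M] {A : ι → κ → M} {B : κ → ι → M} {a b : M}
    (hA : ∀ x, ∑ y, A x y = a) (hB : ∀ y, ∑ x, B y x = b)
    (hab : Fintype.card ι • a ≠ Fintype.card κ • b) :
    ∃ x y, A x y ≠ B y x := by
  by_contra! hAB
  apply hab
  calc Fintype.card ι • a = ∑ x, ∑ y, A x y := by simp [hA]
    _ = ∑ y, ∑ x, B y x := by rw [sum_comm]; simp only [hAB]
    _ = Fintype.card κ • b := by simp [hB]

/-- **Classical bound for the Magic Square game.**
Any pair of deterministic strategies (Alice's rows summing to `0`, Bob's columns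
summing to `1` mod 2) wins on at most 8 of the 9 input pairs. -/
theorem magic_square_deterministic_bound
    (A B : Fin 3 → Fin 3 → ZMod 2)
    (hA : ∀ x : Fin 3, A x 0 + A x 1 + A x 2 = 0)
    (hB : ∀ y : Fin 3, B y 0 + B y 1 + B y 2 = 1) :
    (Finset.univ.filter (fun p : Fin 3 × Fin 3 => A p.1 p.2 = B p.2 p.1)).card ≤ 8 := by
  obtain ⟨x, y, hxy⟩ := exists_ne_transpose_of_smul_ne (A := A) (B := B)
    (by simpa only [Fin.sum_univ_three] using hA) (by simpa only [Fin.sum_univ_three] using hB)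
    (by decide)
  have hlost : (x, y) ∉ univ.filter fun p : Fin 3 × Fin 3 => A p.1 p.2 = B p.2 p.1 := by
    simpa using hxy
  simpa [Nat.lt_succ_iff] using card_lt_univ_of_notMem hlost
end

section
/- Let S be the (finite) set of pairs (A, B) of deterministic Alice and Bob strategies for the Magic Square game, and let w : S → ℝ be nonnegative weights with ∑_{(A,B) ∈ S} w(A,B) = 1 (a local randomized strategy). Then the Bell expression ∑_{x ∈ Fin 3} ∑_{y ∈ Fin 3} ∑_{(A,B) ∈ S, A x y = B y x} w(A,B) is at most 8. That is, every local classical strategy satisfies the Bell-type inequality ∑_{x,y} Pr[a_y^{(x)} = b_x^{(y)} | x, y, R_{L,A}, R_{L,B}] ≤ 8. -/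
/-!
Every deterministic strategy pair loses on at least one of the nine inputs: the entries of `A`
sum to `0` (add up its rows), those of `B` sum to `3 = 1` in `ZMod 2` (add up its columns), so `A`
and `Bᵀ` cannot coincide. A convex mixture of pairs that each win on at most `8` inputs wins at
most `8` in total.
-/

/-- The set of pairs of deterministic Alice and Bob strategies for the Magic
Square game: `A` with all rows summing to `0` and `B` with all columns summing
to `1` (mod 2). -/
def MagicSquareStrategies : Type :=
  {s : (Fin 3 → Fin 3 → ZMod 2) × (Fin 3 → Fin 3 → ZMod 2) //
    (∀ x : Fin 3, s.1 x 0 + s.1 x 1 + s.1 x 2 = 0) ∧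
    (∀ y : Fin 3, s.2 y 0 + s.2 y 1 + s.2 y 2 = 1)}

noncomputable instance : Fintype MagicSquareStrategies := by
  unfold MagicSquareStrategies
  classical
  infer_instance

open Finset

theorem exists_ne_of_sum_ne_sum_transpose {m n R : Type*} [Fintype m] [Fintype n]
    [AddCommMonoid R] (A : m → n → R) (B : n → m → R)
    (h : ∑ x, ∑ y, A x y ≠ ∑ y, ∑ x, B y x) : ∃ x y, A x y ≠ B y x := by
  contrapose! h
  simp only [h]
  exact sum_comm

theorem sum_sum_filter_le_of_card_filter_le {ι σ : Type*} [Fintype ι] [Fintype σ]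
    (P : ι → σ → Prop) [∀ i s, Decidable (P i s)] (w : σ → ℝ) (hw : ∀ s, 0 ≤ w s) (c : ℕ)
    (hc : ∀ s, #{i | P i s} ≤ c) :
    ∑ i, ∑ s with P i s, w s ≤ c * ∑ s, w s := by
  calc ∑ i, ∑ s with P i s, w s = ∑ s, #{i | P i s} * w s := by
        simp only [sum_filter, card_filter, Nat.cast_sum, Nat.cast_ite, Nat.cast_one,
          Nat.cast_zero, sum_mul, ite_mul, one_mul, zero_mul]
        exact sum_comm
    _ ≤ ∑ s, c * w s := by gcongr with s; exacts [hw s, mod_cast hc s]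
    _ = c * ∑ s, w s := (mul_sum ..).symm

namespace MagicSquareStrategies

theorem exists_loss (s : MagicSquareStrategies) : ∃ x y, s.val.1 x y ≠ s.val.2 y x := by
  obtain ⟨⟨A, B⟩, hA, hB⟩ := s
  apply exists_ne_of_sum_ne_sum_transpose
  simp only [Fin.sum_univ_three, hA, hB]
  decide

theorem card_wins_le_eight (s : MagicSquareStrategies) :
    #{p : Fin 3 × Fin 3 | s.val.1 p.1 p.2 = s.val.2 p.2 p.1} ≤ 8 := by
  obtain ⟨x, y, hxy⟩ := s.exists_loss
  have := card_lt_univ_of_notMem (s := {p : Fin 3 × Fin 3 | s.val.1 p.1 p.2 = s.val.2 p.2 p.1})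
    (x := (x, y)) (by simpa using hxy)
  simp only [Fintype.card_prod, Fintype.card_fin] at this
  omega

end MagicSquareStrategies

/-- **The Magic Square Bell-type inequality for local randomized strategies.**
Any convex mixture (nonnegative weights summing to `1`) of deterministic
strategy pairs satisfies
`∑_{x,y} Pr[a_y^{(x)} = b_x^{(y)} | x, y, R_{L,A}, R_{L,B}] ≤ 8`. -/
theorem magic_square_bell_inequality
    (w : MagicSquareStrategies → ℝ)
    (hw0 : ∀ s, 0 ≤ w s)
    (hw1 : ∑ s : MagicSquareStrategies, w s = 1) :
    ∑ x : Fin 3, ∑ y : Fin 3,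
      ∑ s ∈ Finset.univ.filter
          (fun s : MagicSquareStrategies => s.val.1 x y = s.val.2 y x), w s ≤ 8 := by
  rw [← Fintype.sum_prod_type']
  calc _ ≤ ((8 : ℕ) : ℝ) * ∑ s, w s :=
        sum_sum_filter_le_of_card_filter_le _ w hw0 8 MagicSquareStrategies.card_wins_le_eight
    _ = 8 := by rw [hw1]; norm_num
end

section
/- Let X, Y, 𝒜, ℬ be finite nonempty sets with |X| = m_A, |Y| = m_B, |𝒜| = n_A, |ℬ| = n_B. For functions f : X → 𝒜 and g : Y → ℬ, let v(f,g) ∈ ℝ^{X × Y × 𝒜 × ℬ} be the vector with entries v(f,g)(x, y, a, b) = 1 if f x = a and g y = b, and 0 otherwise. Then the affine span of the set {v(f,g) : f : X → 𝒜, g : Y → ℬ} of all local deterministic probability distributions has dimension m_A·m_B·(n_A − 1)·(n_B − 1) + m_A·(n_A − 1) + m_B·(n_B − 1). -/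
/-!
A deterministic strategy `f : X → 𝒜` is recorded by the indicator of its graph, and `v(f, g)` is
the outer product of the two graph indicators. Fix `a₀ ∈ 𝒜`. Since `f` differs from the constant
strategy `a₀` coordinate by coordinate, its graph indicator is an affine combination of those of
the `m_A (n_A - 1) + 1` strategies that deviate from `a₀` in at most one input, and these are
linearly independent. Outer products preserve both affine spans and linear independence, so the
`(m_A (n_A - 1) + 1) (m_B (n_B - 1) + 1)` products of such strategies are affinely independent
and span the same affine subspace as all `v(f, g)`.
-/

theorem LinearMap.apply_mem_affineSpan_range {R M N P ι κ : Type*} [CommRing R]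
    [AddCommGroup M] [Module R M] [AddCommGroup N] [Module R N] [AddCommGroup P] [Module R P]
    (B : M →ₗ[R] N →ₗ[R] P) {u : ι → M} {w : κ → N} {x : M} {y : N}
    (hx : x ∈ affineSpan R (Set.range u)) (hy : y ∈ affineSpan R (Set.range w)) :
    B x y ∈ affineSpan R (Set.range fun k : ι × κ => B (u k.1) (w k.2)) := by
  have hleft : ∀ j, B x (w j) ∈ affineSpan R (Set.range fun k : ι × κ => B (u k.1) (w k.2)) := by
    intro j
    have h := AffineSubspace.mem_map_of_mem (B.flip (w j)).toAffineMap hx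
    rw [AffineSubspace.map_span] at h
    refine affineSpan_mono R ?_ h
    rintro _ ⟨_, ⟨i, rfl⟩, rfl⟩
    exact ⟨(i, j), rfl⟩
  have h := AffineSubspace.mem_map_of_mem (B x).toAffineMap hy
  rw [AffineSubspace.map_span] at h
  refine affineSpan_le.mpr ?_ h
  rintro _ ⟨_, ⟨j, rfl⟩, rfl⟩
  exact hleft j

section OneParty

variable (R : Type*) [CommRing R] {X 𝒜 : Type*} [DecidableEq 𝒜]

def graphIndicator (f : X → 𝒜) : X × 𝒜 → R := fun p => if f p.1 = p.2 then 1 else 0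

variable {R} [DecidableEq X]

def deviation (a₀ : 𝒜) : Option (X × {a : 𝒜 // a ≠ a₀}) → X → 𝒜
  | none => fun _ => a₀
  | some i => Function.update (fun _ => a₀) i.1 i.2

theorem update_const_mem_range_deviation (a₀ a : 𝒜) (x : X) :
    Function.update (fun _ => a₀) x a ∈ Set.range (deviation a₀) := by
  by_cases h : a = a₀
  · exact ⟨none, by simp [deviation, h]⟩
  · exact ⟨some (x, ⟨a, h⟩), rfl⟩

theorem graphIndicator_deviation_some_apply {a₀ a : 𝒜} (ha : a ≠ a₀)
    (i : X × {a : 𝒜 // a ≠ a₀}) (x : X) :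
    graphIndicator R (deviation a₀ (some i)) (x, a) = if i = (x, ⟨a, ha⟩) then 1 else 0 := by
  obtain ⟨x', a', ha'⟩ := i
  by_cases hx : x = x'
  · subst hx
    simp [graphIndicator, deviation]
  · simp [graphIndicator, deviation, hx, Ne.symm ha, Ne.symm hx]

variable [Fintype X]

theorem graphIndicator_eq_add_sum_update (a₀ : 𝒜) (f : X → 𝒜) :
    graphIndicator R f = graphIndicator R (fun _ => a₀) +
      ∑ x, (graphIndicator R (Function.update (fun _ => a₀) x (f x)) -
        graphIndicator R (fun _ => a₀)) := by
  ext ⟨x', a'⟩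
  rw [Pi.add_apply, Finset.sum_apply, Finset.sum_eq_single x']
  · simp [graphIndicator]
  · intro x _ hx
    simp [graphIndicator, Function.update_of_ne (Ne.symm hx)]
  · simp

theorem graphIndicator_mem_affineSpan (a₀ : 𝒜) (f : X → 𝒜) :
    graphIndicator R f ∈ affineSpan R (Set.range fun o => graphIndicator R (deviation a₀ o)) := by
  have h₀ : graphIndicator R (fun _ : X => a₀) ∈
      affineSpan R (Set.range fun o => graphIndicator R (deviation a₀ o)) :=
    subset_affineSpan R _ ⟨none, rfl⟩
  rw [← AffineSubspace.vsub_right_mem_direction_iff_mem h₀, direction_affineSpan,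
    graphIndicator_eq_add_sum_update a₀ f, vsub_eq_sub, add_sub_cancel_left]
  refine Submodule.sum_mem _ fun x _ => vsub_mem_vectorSpan R ?_ ⟨none, rfl⟩
  obtain ⟨o, ho⟩ := update_const_mem_range_deviation a₀ (f x) x
  exact ⟨o, congrArg (graphIndicator R) ho⟩

theorem linearIndependent_graphIndicator_deviation [Fintype 𝒜] [Nonempty X] (a₀ : 𝒜) :
    LinearIndependent R fun o : Option (X × {a : 𝒜 // a ≠ a₀}) =>
      graphIndicator R (deviation a₀ o) := by
  rw [Fintype.linearIndependent_iff]
  intro c hc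
  -- For `a ≠ a₀`, only the graph of `deviation a₀ (some (x, a))` contains `(x, a)`.
  have hsome : ∀ i, c (some i) = 0 := by
    rintro ⟨x, a, ha⟩
    have := congrFun hc (x, a)
    simp only [Finset.sum_apply, Pi.smul_apply, smul_eq_mul, Fintype.sum_option,
      graphIndicator_deviation_some_apply ha, mul_ite, mul_one, mul_zero,
      Finset.sum_ite_eq', Finset.mem_univ, if_true, Pi.zero_apply] at this
    simpa [graphIndicator, deviation, Ne.symm ha] using this
  obtain ⟨x₀⟩ := ‹Nonempty X›
  have := congrFun hc (x₀, a₀)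
  simp only [Finset.sum_apply, Pi.smul_apply, smul_eq_mul, Fintype.sum_option, hsome, zero_mul,
    Finset.sum_const_zero, add_zero, Pi.zero_apply] at this
  rintro (_ | i)
  · simpa [graphIndicator, deviation] using this
  · exact hsome i

end OneParty

theorem Fintype.card_option_prod_ne {X 𝒜 : Type*} [Fintype X] [Fintype 𝒜] [DecidableEq 𝒜]
    (a₀ : 𝒜) :
    Fintype.card (Option (X × {a : 𝒜 // a ≠ a₀})) = Fintype.card X * (Fintype.card 𝒜 - 1) + 1 := by
  simp [Fintype.card_option, Fintype.card_prod, Fintype.card_subtype_compl]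

section TwoParties

variable (R : Type*) [CommRing R] {X Y 𝒜 ℬ : Type*}

def outerProduct : (X × 𝒜 → R) →ₗ[R] (Y × ℬ → R) →ₗ[R] (X × Y × 𝒜 × ℬ → R) :=
  LinearMap.mk₂ R (fun u w q => u (q.1, q.2.2.1) * w (q.2.1, q.2.2.2))
    (fun _ _ _ => funext fun _ => add_mul _ _ _) (fun _ _ _ => funext fun _ => mul_assoc _ _ _)
    (fun _ _ _ => funext fun _ => mul_add _ _ _) (fun _ _ _ => funext fun _ => mul_left_comm _ _ _)

variable {R}

@[simp]
theorem outerProduct_apply (u : X × 𝒜 → R) (w : Y × ℬ → R) (q : X × Y × 𝒜 × ℬ) :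
    outerProduct R u w q = u (q.1, q.2.2.1) * w (q.2.1, q.2.2.2) := rfl

theorem outerProduct_graphIndicator [DecidableEq 𝒜] [DecidableEq ℬ] (f : X → 𝒜) (g : Y → ℬ) :
    outerProduct R (graphIndicator R f) (graphIndicator R g) =
      fun q => if f q.1 = q.2.2.1 ∧ g q.2.1 = q.2.2.2 then 1 else 0 := by
  ext q
  simp only [outerProduct_apply, graphIndicator, ite_zero_mul_ite_zero, mul_one]

theorem linearIndependent_outerProduct {ι κ : Type*} [Fintype ι] [Fintype κ]
    {u : ι → X × 𝒜 → R} {w : κ → Y × ℬ → R}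
    (hu : LinearIndependent R u) (hw : LinearIndependent R w) :
    LinearIndependent R fun k : ι × κ => outerProduct R (u k.1) (w k.2) := by
  rw [Fintype.linearIndependent_iff] at hu hw ⊢
  intro c hc
  have hslice : ∀ j x a, ∑ i, c (i, j) * u i (x, a) = 0 := by
    intro j x a
    refine hw (fun j => ∑ i, c (i, j) * u i (x, a)) (funext fun ⟨y, b⟩ => ?_) j
    have := congrFun hc (x, y, a, b)
    simp only [Finset.sum_apply, Pi.smul_apply, smul_eq_mul, outerProduct_apply,
      Fintype.sum_prod_type, Pi.zero_apply] at this
    simp only [Finset.sum_apply, Pi.smul_apply, smul_eq_mul, Finset.sum_mul, Pi.zero_apply]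
    rw [Finset.sum_comm]
    simpa only [mul_assoc] using this
  rintro ⟨i, j⟩
  refine hu (fun i => c (i, j)) (funext fun ⟨x, a⟩ => ?_) i
  simpa only [Finset.sum_apply, Pi.smul_apply, smul_eq_mul, Pi.zero_apply] using hslice j x a

theorem affineSpan_localDeterministic_eq [Fintype X] [Fintype Y] [DecidableEq X] [DecidableEq Y]
    [DecidableEq 𝒜] [DecidableEq ℬ] (a₀ : 𝒜) (b₀ : ℬ) :
    affineSpan R {v : X × Y × 𝒜 × ℬ → R | ∃ (f : X → 𝒜) (g : Y → ℬ),
        v = fun q => if f q.1 = q.2.2.1 ∧ g q.2.1 = q.2.2.2 then 1 else 0} =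
      affineSpan R (Set.range fun k : Option (X × {a : 𝒜 // a ≠ a₀}) ×
          Option (Y × {b : ℬ // b ≠ b₀}) =>
        outerProduct R (graphIndicator R (deviation a₀ k.1))
          (graphIndicator R (deviation b₀ k.2))) := by
  refine le_antisymm (affineSpan_le.mpr ?_) (affineSpan_mono R ?_)
  · rintro _ ⟨f, g, rfl⟩
    rw [← outerProduct_graphIndicator]
    exact (outerProduct R).apply_mem_affineSpan_range
      (graphIndicator_mem_affineSpan a₀ f) (graphIndicator_mem_affineSpan b₀ g)
  · rintro _ ⟨⟨i, j⟩, rfl⟩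
    exact ⟨deviation a₀ i, deviation b₀ j, outerProduct_graphIndicator _ _⟩

end TwoParties

/-- **Dimension of the local polytope (no-signalling dimension).**
For a bipartite scenario with finite nonempty input sets `X, Y` and output sets
`𝒜, ℬ`, the affine span of all local deterministic probability vectors
`v(f,g)(x, y, a, b) = [f x = a] · [g y = b]` has dimension
`m_A m_B (n_A − 1)(n_B − 1) + m_A (n_A − 1) + m_B (n_B − 1)`. -/
theorem dimension_of_local_polytope
    {X Y 𝒜 ℬ : Type*} [Fintype X] [Fintype Y] [Fintype 𝒜] [Fintype ℬ]
    [Nonempty X] [Nonempty Y] [Nonempty 𝒜] [Nonempty ℬ]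
    [DecidableEq 𝒜] [DecidableEq ℬ] :
    Module.finrank ℝ
      (affineSpan ℝ
        {v : X × Y × 𝒜 × ℬ → ℝ |
          ∃ (f : X → 𝒜) (g : Y → ℬ),
            v = fun q => if f q.1 = q.2.2.1 ∧ g q.2.1 = q.2.2.2 then 1 else 0}).direction
      = Fintype.card X * Fintype.card Y * (Fintype.card 𝒜 - 1) * (Fintype.card ℬ - 1)
        + Fintype.card X * (Fintype.card 𝒜 - 1)
        + Fintype.card Y * (Fintype.card ℬ - 1) := by
  classical
  obtain ⟨a₀⟩ := ‹Nonempty 𝒜›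
  obtain ⟨b₀⟩ := ‹Nonempty ℬ›
  have hindep : AffineIndependent ℝ fun k : Option (X × {a : 𝒜 // a ≠ a₀}) ×
      Option (Y × {b : ℬ // b ≠ b₀}) =>
        outerProduct ℝ (graphIndicator ℝ (deviation a₀ k.1))
          (graphIndicator ℝ (deviation b₀ k.2)) :=
    (linearIndependent_outerProduct (linearIndependent_graphIndicator_deviation (R := ℝ) a₀)
      (linearIndependent_graphIndicator_deviation (R := ℝ) b₀)).affineIndependent
  rw [affineSpan_localDeterministic_eq a₀ b₀, direction_affineSpan]
  refine hindep.finrank_vectorSpan ?_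
  rw [Fintype.card_prod, Fintype.card_option_prod_ne, Fintype.card_option_prod_ne]
  ring
end
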